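/- arXiv:1405.5599 — 4 statements merged into one kernel-verified Lean document; each statement's English description precedes it below -/
import Mathlib

section
/- Let k ∈ ℕ and let T_0, T_1, T_2, … be nonempty sets of finite ordered trees, each tree of rank at most k. Then the function f(n) = max{|t| : t ∈ T_n} grows exponentially (f ∈ 2^{Ω(n)}) if and only if the function f'(n) = max{|σ(t)| : t ∈ T_n} grows exponentially (f' ∈ 2^{Ω(n)}). -/
/-! ## Finite ordered trees -/

inductive OTree (α : Type) : Type where
  | node : α → List (OTree α) → OTree α

namespace OTree

/-- Number of nodes of a tree. -/
def size {α : Type} : OTree α → ℕ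
  | node _ ts => 1 + (ts.attach.map (fun x => size x.1)).sum
decreasing_by
  have := List.sizeOf_lt_of_mem x.2
  simp only [OTree.node.sizeOf_spec]
  omega

/-- Does some label in the tree satisfy `p`? -/
def anyLabel {α : Type} (p : α → Bool) : OTree α → Bool
  | node l ts => p l || ts.attach.any (fun x => anyLabel p x.1)
decreasing_by
  have := List.sizeOf_lt_of_mem x.2
  simp only [OTree.node.sizeOf_spec]
  omega

/-- Rank: maximum number of children of a node. -/
def rank {α : Type} : OTree α → ℕ
  | node _ ts => max ts.length ((ts.attach.map (fun x => rank x.1)).foldr max 0)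
decreasing_by
  have := List.sizeOf_lt_of_mem x.2
  simp only [OTree.node.sizeOf_spec]
  omega

/-- Root label. -/
def root {α : Type} : OTree α → α
  | node l _ => l

end OTree

/-! ## Prioritized NFA -/

/-- A prioritized NFA over alphabet `A` with state set `Q`.  `isQ2 q = true` means `q ∈ Q₂`
(the ε-states); `isQ2 q = false` means `q ∈ Q₁`.  `d1` is the (partial) deterministic
transition function on `Q₁`, `d2` the prioritized ε-transition function on `Q₂`
(the list order gives the priorities), `final` the set of final states. -/
structure PNFA (A Q : Type) where
  isQ2 : Q → Bool
  init : Q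
  d1 : Q → A → Option Q
  d2 : Q → List Q
  final : Q → Bool

/-- Labels of nodes of backtracking runs: states, `acc` and `rej`. -/
inductive BLab (Q : Type) : Type where
  | st : Q → BLab Q
  | acc : BLab Q
  | rej : BLab Q

/-- A backtracking run succeeds iff `acc` occurs in it. -/
def OTree.succeeds {Q : Type} (t : OTree (BLab Q)) : Bool :=
  t.anyLabel (fun l => match l with | BLab.acc => true | _ => false)

/-- Keep the children trees up to and including the first succeeding one
(all of them if none succeeds). -/
def firstSucc {Q : Type} : List (OTree (BLab Q)) → List (OTree (BLab Q))
  | [] => []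
  | t :: ts => if t.succeeds then [t] else t :: firstSucc ts

/-- Termination measure for ε-recursions. -/
def cMeasure {A Q : Type} [Fintype Q] (M : PNFA A Q) (C : Q → ℕ) : ℕ :=
  ∑ q : Q, ((M.d2 q).length - min (C q) (M.d2 q).length)

/-- The `(q,w,C)`-backtracking run of the pNFA `M`. -/
def btr {A Q : Type} [DecidableEq Q] [Fintype Q] (M : PNFA A Q) (q : Q) (w : List A)
    (C : Q → ℕ) : OTree (BLab Q) :=
  if M.final q = true ∧ w.isEmpty = true then .node (.st q) [.node .acc []]
  else if M.isQ2 q = true then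
    if hik : (M.d2 q).length < C q + 1 then .node (.st q) [.node .rej []]
    else
      .node (.st q) (firstSucc ((List.range' (C q + 1) ((M.d2 q).length - C q)).attach.map
        (fun x => btr M ((M.d2 q)[x.1 - 1]'(by
            have hx := x.2; rw [List.mem_range'_1] at hx; omega)) w
          (Function.update C q x.1))))
  else
    match w with
    | [] => .node (.st q) [.node .rej []]
    | a :: w' =>
      match M.d1 q a with
      | some q' => .node (.st q) [btr M q' w' (fun _ => 0)]
      | none => .node (.st q) [.node .rej []]
termination_by (w.length, cMeasure M C)
decreasing_by
  · apply Prod.Lex.right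
    have hx := x.2; rw [List.mem_range'_1] at hx
    apply Finset.sum_lt_sum
    · intro p _
      by_cases hp : p = q
      · subst hp; simp only [Function.update_self]; omega
      · simp only [Function.update_of_ne hp]; omega
    · exact ⟨q, Finset.mem_univ q, by simp only [Function.update_self]; omega⟩
  · apply Prod.Lex.left
    simp

/-- The backtracking run of `M` on `w`. -/
def btrW {A Q : Type} [DecidableEq Q] [Fintype Q] (M : PNFA A Q) (w : List A) :
    OTree (BLab Q) :=
  btr M M.init w (fun _ => 0)

/-! ## NFA with ε-transitions -/

/-- An NFA with ε-transitions (`none` plays the role of ε). -/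
structure ENFA (A Q : Type) where
  init : Q
  tr : Q → Option A → Set Q
  F : Set Q

namespace ENFA

inductive Steps {A Q : Type} (N : ENFA A Q) : Q → List A → Q → Prop
  | refl (q : Q) : Steps N q [] q
  | eps {p q r : Q} {w : List A} : q ∈ N.tr p none → Steps N q w r → Steps N p w r
  | sym {p q r : Q} {a : A} {w : List A} :
      q ∈ N.tr p (some a) → Steps N q w r → Steps N p (a :: w) r

/-- The language accepted by the ε-NFA. -/
def Lang {A Q : Type} (N : ENFA A Q) : Set (List A) :=
  {w | ∃ q, q ∈ N.F ∧ N.Steps N.init w q}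

end ENFA

/-- The NFA `Ā` corresponding to a pNFA (forget priorities). -/
def PNFA.toENFA {A Q : Type} (M : PNFA A Q) : ENFA A Q where
  init := M.init
  tr q o :=
    match o with
    | some a => if M.isQ2 q then ∅ else {q' | M.d1 q a = some q'}
    | none => if M.isQ2 q then {q' | q' ∈ M.d2 q} else ∅
  F := {q | M.final q = true}

/-! ## Growth conditions -/

/-- `f` grows exponentially, i.e. `f ∈ 2^{Ω(n)}`. -/
def ExpGrowth (f : ℕ → ℕ) : Prop :=
  ∃ c : ℝ, 1 < c ∧ ∃ N : ℕ, ∀ n ≥ N, c ^ n ≤ (f n : ℝ)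

/-- `f(n) = max {|btr_M(w)| : |w| ≤ n}` (the alphabet being finite, the set below is a
nonempty bounded set of naturals, so `sSup` is its maximum). -/
noncomputable def btrMax {A Q : Type} [Fintype A] [DecidableEq Q] [Fintype Q]
    (M : PNFA A Q) (n : ℕ) : ℕ :=
  sSup {m | ∃ w : List A, w.length ≤ n ∧ m = (btrW M w).size}

/-- Number of leaves of a tree. -/
def OTree.leaves {α : Type} : OTree α → ℕ
  | .node _ [] => 1
  | .node _ ts => (ts.attach.map (fun x => leaves x.1)).sum
decreasing_by
  have := List.sizeOf_lt_of_mem x.2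
  simp only [OTree.node.sizeOf_spec]
  omega

/-- Every node is a leaf or has at least two children. -/
def Branching {α : Type} : OTree α → Prop
  | .node _ ts => (ts.length = 0 ∨ 2 ≤ ts.length) ∧ ∀ x ∈ ts.attach, Branching x.1
decreasing_by
  have := List.sizeOf_lt_of_mem x.2
  simp only [OTree.node.sizeOf_spec]
  omega

/-- Specification of the pruning function σ: it keeps leaves, keeps unary nodes
(recursively pruned), and at nodes with `k ≥ 2` children keeps (the prunings of)
two largest children. -/
def SigmaSpec {α : Type} (σ : OTree α → OTree α) : Prop :=
  ∀ (a : α) (ts : List (OTree α)),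
    (ts = [] → σ (.node a ts) = .node a ts) ∧
    (∀ t, ts = [t] → σ (.node a ts) = .node a [σ t]) ∧
    (2 ≤ ts.length →
      ∃ i j : Fin ts.length, i ≠ j ∧
        (∀ l : Fin ts.length, l ≠ i → l ≠ j →
          (ts.get l).size ≤ (ts.get i).size ∧ (ts.get l).size ≤ (ts.get j).size) ∧
        σ (.node a ts) = .node a [σ (ts.get i), σ (ts.get j)])

/-! Pruning only discards nodes, so `|σ t| ≤ |t|`. Conversely, let `m = k + 1` and consider a node
whose two kept subtrees prune to sizes `a ≥ b`. By induction the kept subtrees have at most `a ^ m`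
and `b ^ m` nodes, and every discarded sibling is no larger than either of them, so
`|t| ≤ 1 + a ^ m + (k - 1) * b ^ m ≤ (1 + a + b) ^ m = |σ t| ^ m`.
Hence `f' ≤ f ≤ f' ^ m`, and exponential growth of `f` passes to `f'` by taking `m`-th roots. -/

theorem Nat.one_add_pow_add_mul_pow_le {x y m : ℕ} (hm : 1 ≤ m) (hyx : y ≤ x) :
    1 + x ^ m + m * y ^ m ≤ (1 + x + y) ^ m := by
  induction m, hm using Nat.le_induction with
  | base => simp
  | succ m _ ih =>
    have hyy : y * y ^ m ≤ y * x ^ m := Nat.mul_le_mul_left _ (Nat.pow_le_pow_left hyx m)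
    calc 1 + x ^ (m + 1) + (m + 1) * y ^ (m + 1)
        ≤ (1 + x ^ m + m * y ^ m) * (1 + x + y) := by
          rw [pow_succ, pow_succ]
          generalize x ^ m = X at hyy ⊢
          generalize y ^ m = Y at hyy ⊢
          nlinarith [Nat.zero_le (m * Y * x)]
      _ ≤ (1 + x + y) ^ m * (1 + x + y) := Nat.mul_le_mul_right _ ih
      _ = (1 + x + y) ^ (m + 1) := (pow_succ _ _).symm

theorem Finset.sum_le_max_add_mul_min {ι : Type*} [Fintype ι] [DecidableEq ι] (g : ι → ℕ)
    {i j : ι} (hij : i ≠ j) (hle : ∀ l, l ≠ i → l ≠ j → g l ≤ min (g i) (g j)) :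
    ∑ l, g l ≤ max (g i) (g j) + (Fintype.card ι - 1) * min (g i) (g j) := by
  have hj : j ∈ univ.erase i := mem_erase.2 ⟨hij.symm, mem_univ j⟩
  have hcard : ((univ.erase i).erase j).card + 1 = Fintype.card ι - 1 := by
    rw [card_erase_of_mem hj, card_erase_of_mem (mem_univ i), card_univ]
    have := Fintype.one_lt_card_iff.2 ⟨i, j, hij⟩
    omega
  have hrest :
      ∑ l ∈ (univ.erase i).erase j, g l ≤ ((univ.erase i).erase j).card * min (g i) (g j) :=
    sum_le_card_nsmul _ _ _ fun l hl => by
      simp only [mem_erase, mem_univ, and_true] at hl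
      exact hle l hl.2 hl.1
  have := max_add_min (g i) (g j)
  rw [← add_sum_erase _ _ (mem_univ i), ← add_sum_erase _ _ hj, ← hcard, add_one_mul]
  omega

namespace OTree

variable {α : Type}

theorem size_node (a : α) (ts : List (OTree α)) :
    (node a ts).size = 1 + (ts.map size).sum := by
  rw [size, List.attach_map_val]

theorem length_le_rank (a : α) (ts : List (OTree α)) : ts.length ≤ (node a ts).rank := by
  rw [rank]; exact le_max_left _ _

theorem rank_le_of_mem {a : α} {ts : List (OTree α)} {t : OTree α} (ht : t ∈ ts) :
    t.rank ≤ (node a ts).rank := by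
  rw [rank, List.attach_map_val]
  exact le_max_of_le_right (List.le_max_of_le' 0 (List.mem_map_of_mem ht) le_rfl)

@[elab_as_elim]
theorem node_induction {P : OTree α → Prop}
    (node : ∀ a ts, (∀ t ∈ ts, P t) → P (node a ts)) : ∀ t, P t
  | .node a ts => node a ts fun t _ => node_induction node t
decreasing_by
  have := List.sizeOf_lt_of_mem ‹t ∈ ts›
  simp only [OTree.node.sizeOf_spec]
  omega

theorem size_node_singleton (a : α) (t : OTree α) : (node a [t]).size = 1 + t.size := by
  simp only [size_node, List.map_cons, List.map_nil, List.sum_cons, List.sum_nil, add_zero]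

theorem size_node_pair (a : α) (t t' : OTree α) :
    (node a [t, t']).size = 1 + t.size + t'.size := by
  simp only [size_node, List.map_cons, List.map_nil, List.sum_cons, List.sum_nil]
  omega

theorem sum_map_size_eq_sum_fin (ts : List (OTree α)) :
    (ts.map size).sum = ∑ l : Fin ts.length, (ts.get l).size := by
  simp

end OTree

namespace SigmaSpec

open OTree

variable {α : Type} {σ : OTree α → OTree α}

theorem size_le (hσ : SigmaSpec σ) (t : OTree α) : (σ t).size ≤ t.size := by
  induction t using node_induction with
  | node a ts ih =>
    obtain ⟨hnil, hsingle, htwo⟩ := hσ a ts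
    obtain hlen | hlen | hlen : ts.length = 0 ∨ ts.length = 1 ∨ 2 ≤ ts.length := by omega
    · rw [hnil (List.length_eq_zero_iff.1 hlen)]
    · obtain ⟨t, rfl⟩ := List.length_eq_one_iff.1 hlen
      have := ih t (by simp)
      rw [hsingle t rfl, size_node_singleton, size_node_singleton]
      omega
    · obtain ⟨i, j, hij, -, hσt⟩ := htwo hlen
      have hi := ih _ (ts.get_mem i)
      have hj := ih _ (ts.get_mem j)
      have hpair : (ts.get i).size + (ts.get j).size ≤ (ts.map size).sum := by
        rw [sum_map_size_eq_sum_fin, ← Finset.sum_pair (f := fun l => (ts.get l).size) hij]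
        exact Finset.sum_le_sum_of_subset (Finset.subset_univ _)
      rw [hσt, size_node_pair, size_node]
      omega

theorem size_le_size_pow (hσ : SigmaSpec σ) {k : ℕ} {t : OTree α} (ht : t.rank ≤ k) :
    t.size ≤ (σ t).size ^ (k + 1) := by
  induction t using node_induction with
  | node a ts ih =>
    have ih' : ∀ t ∈ ts, t.size ≤ (σ t).size ^ (k + 1) := fun t hts =>
      ih t hts ((rank_le_of_mem hts).trans ht)
    obtain ⟨hnil, hsingle, htwo⟩ := hσ a ts
    obtain hlen | hlen | hlen : ts.length = 0 ∨ ts.length = 1 ∨ 2 ≤ ts.length := by omega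
    · rw [hnil (List.length_eq_zero_iff.1 hlen)]
      exact Nat.le_self_pow k.add_one_ne_zero _
    · obtain ⟨t, rfl⟩ := List.length_eq_one_iff.1 hlen
      have key := Nat.one_add_pow_add_mul_pow_le (Nat.le_add_left 1 k) (Nat.zero_le (σ t).size)
      rw [add_zero, zero_pow k.add_one_ne_zero, mul_zero, add_zero] at key
      have := ih' t (by simp)
      rw [hsingle t rfl, size_node_singleton, size_node_singleton]
      omega
    · obtain ⟨i, j, hij, hlargest, hσt⟩ := htwo hlen
      have hsum := Finset.sum_le_max_add_mul_min (fun l => (ts.get l).size) hij fun l hli hlj =>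
        le_min (hlargest l hli hlj).1 (hlargest l hli hlj).2
      rw [Fintype.card_fin] at hsum
      set s₁ := (σ (ts.get i)).size
      set s₂ := (σ (ts.get j)).size
      have hi := ih' _ (ts.get_mem i)
      have hj := ih' _ (ts.get_mem j)
      have hmax : max (ts.get i).size (ts.get j).size ≤ max s₁ s₂ ^ (k + 1) :=
        (max_le_max hi hj).trans_eq ((pow_left_mono _).map_max).symm
      have hmin : min (ts.get i).size (ts.get j).size ≤ min s₁ s₂ ^ (k + 1) :=
        (min_le_min hi hj).trans_eq ((pow_left_mono _).map_min).symm
      have hL : ts.length - 1 ≤ k + 1 := by have := (length_le_rank a ts).trans ht; omega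
      calc (node a ts).size ≤ 1 + max s₁ s₂ ^ (k + 1) + (k + 1) * min s₁ s₂ ^ (k + 1) := by
            have := Nat.mul_le_mul hL hmin
            rw [size_node, sum_map_size_eq_sum_fin]
            omega
        _ ≤ (1 + max s₁ s₂ + min s₁ s₂) ^ (k + 1) :=
            Nat.one_add_pow_add_mul_pow_le (Nat.le_add_left 1 k) min_le_max
        _ = (σ (node a ts)).size ^ (k + 1) := by
            rw [hσt, size_node_pair, add_assoc, max_add_min, ← add_assoc]

end SigmaSpec

theorem ExpGrowth.of_le_pow {f g : ℕ → ℕ} {m : ℕ} (hf : ExpGrowth f) (hm : m ≠ 0)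
    (hfg : ∀ n, f n ≤ g n ^ m) : ExpGrowth g := by
  obtain ⟨c, hc, N, hN⟩ := hf
  have hc0 : 0 ≤ c := zero_le_one.trans hc.le
  refine ⟨c ^ (m⁻¹ : ℝ), Real.one_lt_rpow hc (by positivity), N, fun n hn => ?_⟩
  refine le_of_pow_le_pow_left₀ hm (by positivity) ?_
  calc ((c ^ (m⁻¹ : ℝ)) ^ n) ^ m = c ^ n := by
        rw [← pow_mul, mul_comm, pow_mul, Real.rpow_inv_natCast_pow hc0 hm]
    _ ≤ f n := hN n hn
    _ ≤ (g n : ℝ) ^ m := by exact_mod_cast hfg n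

theorem le_pow_of_isGreatest_image {β : Type*} {s : Set β} {u v : β → ℕ} {a b m : ℕ}
    (ha : IsGreatest (u '' s) a) (hb : IsGreatest (v '' s) b) (huv : ∀ x ∈ s, u x ≤ v x ^ m) :
    a ≤ b ^ m := by
  obtain ⟨x, hx, rfl⟩ := ha.1
  exact (huv x hx).trans (Nat.pow_le_pow_left (hb.2 ⟨x, hx, rfl⟩) m)

theorem statement0_general {α : Type} (k : ℕ) (T : ℕ → Set (OTree α))
    (hrk : ∀ n, ∀ t ∈ T n, t.rank ≤ k)
    (σ : OTree α → OTree α) (hσ : SigmaSpec σ)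
    (f f' : ℕ → ℕ)
    (hf : ∀ n, IsGreatest (OTree.size '' T n) (f n))
    (hf' : ∀ n, IsGreatest ((fun t => (σ t).size) '' T n) (f' n)) :
    ExpGrowth f ↔ ExpGrowth f' := by
  have hf'f : ∀ n, f' n ≤ f n ^ 1 := fun n =>
    le_pow_of_isGreatest_image (hf' n) (hf n) fun t _ => (hσ.size_le t).trans_eq (pow_one _).symm
  have hff' : ∀ n, f n ≤ f' n ^ (k + 1) := fun n =>
    le_pow_of_isGreatest_image (hf n) (hf' n) fun t ht => hσ.size_le_size_pow (hrk n t ht)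
  exact ⟨fun h => h.of_le_pow k.add_one_ne_zero hff', fun h => h.of_le_pow one_ne_zero hf'f⟩

/-- For nonempty families `T n` of trees of rank at most `k`,
`f(n) = max{|t| : t ∈ T n}` grows exponentially iff
`f'(n) = max{|σ(t)| : t ∈ T n}` grows exponentially. -/
theorem statement0 {α : Type} (k : ℕ) (T : ℕ → Set (OTree α))
    (hne : ∀ n, (T n).Nonempty)
    (hrk : ∀ n, ∀ t ∈ T n, t.rank ≤ k)
    (σ : OTree α → OTree α) (hσ : SigmaSpec σ)
    (f f' : ℕ → ℕ)
    (hf : ∀ n, IsGreatest (OTree.size '' T n) (f n))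
    (hf' : ∀ n, IsGreatest ((fun t => (σ t).size) '' T n) (f' n)) :
    ExpGrowth f ↔ ExpGrowth f' :=
  statement0_general k T hrk σ hσ f f' hf hf'
end

section
/- For every pNFA A and every string w ∈ Σ*: w ∈ L(A) if and only if the backtracking run btr_A(w) succeeds (i.e., the label Acc occurs in it). -/
/-! `btr M q w C` succeeds exactly when `Ā` has an accepting path from `q` on `w` whose ε-steps
before the first symbol avoid the successors already tried according to `C`. The only
nontrivial direction is that the counter updates of the run never block such a path: cutting the
path at its last visit to `q` before the first symbol gives a path from the chosen successor of
`q` that never returns to `q`, so raising the counter of `q` does not affect it. -/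

namespace OTree

theorem anyLabel_node {α : Type} (p : α → Bool) (l : α) (ts : List (OTree α)) :
    anyLabel p (node l ts) = (p l || ts.any (anyLabel p)) := by
  simp only [anyLabel.eq_1, List.any_subtype, List.unattach_attach]

variable {Q : Type}

@[simp]
theorem succeeds_node_st (q : Q) (ts : List (OTree (BLab Q))) :
    (node (.st q) ts).succeeds = ts.any succeeds :=
  anyLabel_node _ _ _

@[simp]
theorem succeeds_node_acc (ts : List (OTree (BLab Q))) : (node .acc ts).succeeds = true :=
  anyLabel_node _ _ _

@[simp]
theorem succeeds_node_rej_nil : (node (.rej : BLab Q) []).succeeds = false :=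
  anyLabel_node _ _ _

end OTree

@[simp]
theorem any_succeeds_firstSucc {Q : Type} (ts : List (OTree (BLab Q))) :
    (firstSucc ts).any OTree.succeeds = ts.any OTree.succeeds := by
  induction ts with
  | nil => rfl
  | cons t ts ih => by_cases h : t.succeeds <;> simp [firstSucc, h, ih]

namespace PNFA

variable {A Q : Type} {M : PNFA A Q}

/-- `M.Accepts q w C`: some accepting path of `M.toENFA` reads `w` from `q`, and each ε-step it
takes before reading its first symbol goes from a state `p` to its `k`-th successor (0-based)
with `C p ≤ k`, i.e. avoids the `C p` successors the backtracking run has already tried. -/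
inductive Accepts (M : PNFA A Q) : Q → List A → (Q → ℕ) → Prop
  | final {q C} : M.final q = true → M.Accepts q [] C
  | eps {q w C} (k : ℕ) (hk : k < (M.d2 q).length) : M.isQ2 q = true → C q ≤ k →
      M.Accepts (M.d2 q)[k] w C → M.Accepts q w C
  | sym {q a w q' C} : M.isQ2 q = false → M.d1 q a = some q' →
      M.Accepts q' w (fun _ => 0) → M.Accepts q (a :: w) C

theorem Accepts.mono {q : Q} {w : List A} {C C' : Q → ℕ} (h : M.Accepts q w C')
    (hC : C ≤ C') : M.Accepts q w C := by
  induction h with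
  | final hf => exact .final hf
  | eps k hk hq hle _ ih => exact .eps k hk hq ((hC _).trans hle) (ih hC)
  | sym hq hd h => exact .sym hq hd h

theorem Accepts.exists_steps {q : Q} {w : List A} {C : Q → ℕ} (h : M.Accepts q w C) :
    ∃ r, M.final r = true ∧ M.toENFA.Steps q w r := by
  induction h with
  | @final q _ hf => exact ⟨q, hf, .refl q⟩
  | eps k hk hq _ _ ih =>
    obtain ⟨r, hr, hst⟩ := ih
    exact ⟨r, hr, .eps (by simp [toENFA, hq]) hst⟩
  | sym hq hd _ ih =>
    obtain ⟨r, hr, hst⟩ := ih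
    exact ⟨r, hr, .sym (by simp [toENFA, hq, hd]) hst⟩

theorem accepts_of_steps {q r : Q} {w : List A} (h : M.toENFA.Steps q w r)
    (hr : M.final r = true) : M.Accepts q w (fun _ => 0) := by
  induction h with
  | refl => exact .final hr
  | @eps p _ _ _ hm _ ih =>
    cases hp : M.isQ2 p <;> simp only [toENFA, hp] at hm
    · exact absurd hm (Set.notMem_empty _)
    · obtain ⟨k, hk, rfl⟩ := List.mem_iff_getElem.mp hm
      exact .eps k hk hp (Nat.zero_le k) (ih hr)
  | @sym p _ _ _ _ hm _ ih =>
    cases hp : M.isQ2 p <;> simp only [toENFA, hp] at hm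
    · exact .sym hp hm (ih hr)
    · exact absurd hm (Set.notMem_empty _)

theorem accepts_iff_exists_steps {q : Q} {w : List A} :
    M.Accepts q w (fun _ => 0) ↔ ∃ r, M.final r = true ∧ M.toENFA.Steps q w r :=
  ⟨Accepts.exists_steps, fun ⟨_, hr, hst⟩ => accepts_of_steps hst hr⟩

/-- Cut the path at its last ε-step out of `q` before the first symbol, if there is one;
the rest of the path never visits `q` again before the first symbol. -/
theorem Accepts.exists_last_exit_or [DecidableEq Q] {p q : Q} {w : List A} {C : Q → ℕ}
    (h : M.Accepts p w C) :
    (∃ k, ∃ hk : k < (M.d2 q).length, C q ≤ k ∧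
      M.Accepts (M.d2 q)[k] w (Function.update C q (k + 1))) ∨
    M.Accepts p w (Function.update C q (M.d2 q).length) := by
  induction h with
  | final hf => exact .inr (.final hf)
  | sym hp hd h => exact .inr (.sym hp hd h)
  | @eps p _ _ k hk hp hle _ ih =>
    rcases ih with hexit | hacc
    · exact .inl hexit
    by_cases hpq : p = q
    · subst hpq
      exact .inl ⟨k, hk, hle, hacc.mono (Function.update_mono hk)⟩
    · exact .inr (.eps k hk hp (by rwa [Function.update_of_ne hpq]) hacc)

theorem Accepts.exists_succ_of_isQ2 [DecidableEq Q] {q : Q} {w : List A} {C : Q → ℕ}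
    (h : M.Accepts q w C) (hq : M.isQ2 q = true) (hfin : ¬(M.final q = true ∧ w = [])) :
    ∃ k, ∃ hk : k < (M.d2 q).length, C q ≤ k ∧
      M.Accepts (M.d2 q)[k] w (Function.update C q (k + 1)) := by
  refine h.exists_last_exit_or.resolve_right fun h' => ?_
  cases h' with
  | final hf => exact hfin ⟨hf, rfl⟩
  | eps k hk _ hle => rw [Function.update_self] at hle; omega
  | sym hq' => simp [hq] at hq'

theorem Accepts.final_of_not_isQ2 {q : Q} {C : Q → ℕ} (h : M.Accepts q [] C)
    (hq : M.isQ2 q = false) : M.final q = true := by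
  cases h with
  | final hf => exact hf
  | eps _ _ hq' => simp [hq] at hq'

theorem accepts_cons_iff_of_not_isQ2 {q : Q} {a : A} {w : List A} {C : Q → ℕ}
    (hq : M.isQ2 q = false) :
    M.Accepts q (a :: w) C ↔ ∃ q', M.d1 q a = some q' ∧ M.Accepts q' w (fun _ => 0) := by
  refine ⟨fun h => ?_, fun ⟨_, hd, h⟩ => .sym hq hd h⟩
  cases h with
  | eps _ _ hq' => simp [hq] at hq'
  | sym _ hd h => exact ⟨_, hd, h⟩

theorem succeeds_btr_iff [DecidableEq Q] [Fintype Q] (q : Q) (w : List A) (C : Q → ℕ) :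
    (btr M q w C).succeeds = true ↔ M.Accepts q w C := by
  induction q, w, C using btr.induct M with
  | case1 q w C h =>
    rw [btr.eq_def, if_pos h]
    obtain ⟨hf, hw⟩ := h
    rw [List.isEmpty_iff.mp hw]
    simpa only [OTree.succeeds_node_st, List.any_cons, OTree.succeeds_node_acc, Bool.true_or,
      true_iff] using Accepts.final hf
  | case2 q w C hfin hq hC =>
    rw [btr.eq_def, if_neg hfin, if_pos hq, dif_pos hC]
    simp only [OTree.succeeds_node_st, List.any_cons, OTree.succeeds_node_rej_nil, List.any_nil,
      Bool.or_false, Bool.false_eq_true, false_iff]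
    intro h
    obtain ⟨k, hk, hle, -⟩ := h.exists_succ_of_isQ2 hq (by simpa using hfin)
    omega
  | case3 q w C hfin hq hC ih =>
    rw [btr.eq_def, if_neg hfin, if_pos hq, dif_neg hC]
    simp only [OTree.succeeds_node_st, any_succeeds_firstSucc, List.any_map, List.any_eq_true,
      List.mem_attach, true_and, Function.comp_apply, Subtype.exists]
    constructor
    · rintro ⟨x, hx, hs⟩
      rw [List.mem_range'_1] at hx
      exact .eps (x - 1) (by omega) hq (by omega)
        (((ih ⟨x, _⟩).mp hs).mono (le_update_self_iff.mpr (by dsimp only; omega)))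
    · intro h
      obtain ⟨k, hk, hle, hacc⟩ := h.exists_succ_of_isQ2 hq (by simpa using hfin)
      have hx : k + 1 ∈ List.range' (C q + 1) ((M.d2 q).length - C q) := by
        rw [List.mem_range'_1]; omega
      exact ⟨k + 1, hx, (ih ⟨k + 1, hx⟩).mpr hacc⟩
  | case4 q C hq hfin =>
    rw [btr.eq_def, if_neg hfin, if_neg hq]
    simp only [OTree.succeeds_node_st, List.any_cons, OTree.succeeds_node_rej_nil, List.any_nil,
      Bool.or_false, Bool.false_eq_true, false_iff]
    exact fun h => hfin ⟨h.final_of_not_isQ2 (Bool.of_not_eq_true hq), rfl⟩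
  | case5 q C hq a w q' hd hfin ih =>
    rw [btr.eq_def, if_neg hfin, if_neg hq]
    simp only [hd, OTree.succeeds_node_st, List.any_cons, List.any_nil, Bool.or_false, ih,
      accepts_cons_iff_of_not_isQ2 (Bool.of_not_eq_true hq), Option.some.injEq, exists_eq_left']
  | case6 q C hq a w hd hfin =>
    rw [btr.eq_def, if_neg hfin, if_neg hq]
    simp only [hd, OTree.succeeds_node_st, List.any_cons, OTree.succeeds_node_rej_nil,
      List.any_nil, Bool.or_false, Bool.false_eq_true,
      accepts_cons_iff_of_not_isQ2 (Bool.of_not_eq_true hq), reduceCtorEq, false_and, exists_false]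

end PNFA

/-- `w ∈ L(A)` iff the backtracking run of `A` on `w` succeeds. -/
theorem statement2 {A Q : Type} [DecidableEq Q] [Fintype Q] (M : PNFA A Q) (w : List A) :
    w ∈ M.toENFA.Lang ↔ (btrW M w).succeeds = true := by
  rw [btrW, PNFA.succeeds_btr_iff, PNFA.accepts_iff_exists_steps]
  rfl
end

section
/- Let A be a pNFA and let A'' be the pNFA obtained from A by δ2-flattening without applying r̄, i.e., A''=(Q1,Q2,Σ,q0,δ1,δ2'',F'') with δ2''(q)=d(q,0) for all q∈Q2 and F''={q : some state of F occurs in d(q,0)}. Then for every string w ∈ Σ* and every node v of the backtracking run btr_{A''}(w): if two children of v carry the same root label, then the subtrees of btr_{A''}(w) rooted at these two children are identical. -/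
/-! ## δ₂-flattening -/

/-- The function `d(q, C)` of the flattening construction. -/
def dFlat {A Q : Type} [DecidableEq Q] [Fintype Q] (M : PNFA A Q) (q : Q) (C : Q → ℕ) :
    List Q :=
  if M.isQ2 q = true then
    if h : C q < (M.d2 q).length then
      (((M.d2 q).drop (C q)).attach.map
        (fun p => dFlat M p.1 (Function.update C q (C q + 1)))).flatten
    else []
  else [q]
termination_by cMeasure M C
decreasing_by
  apply Finset.sum_lt_sum
  · intro p _
    by_cases hp : p = q
    · subst hp; simp only [Function.update_self]; omega
    · simp only [Function.update_of_ne hp]; omega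
  · exact ⟨q, Finset.mem_univ q, by simp only [Function.update_self]; omega⟩

/-- `r̄`: remove all occurrences of each state beyond the first two, keeping the order. -/
def keepTwoAux {Q : Type} [DecidableEq Q] : List Q → List Q → List Q
  | _, [] => []
  | seen, q :: rest =>
    if 2 ≤ seen.count q then keepTwoAux seen rest
    else q :: keepTwoAux (q :: seen) rest

/-- `r̄`: remove all occurrences of each state beyond the first two, keeping the order. -/
def keepTwo {Q : Type} [DecidableEq Q] (l : List Q) : List Q := keepTwoAux [] l

/-- The δ₂-flattening `A'` of a pNFA `A`: `δ₂'(q) = r̄(d(q,0))` and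
`F' = {q : some state of F occurs in d(q,0)}`. -/
def PNFA.flatten {A Q : Type} [DecidableEq Q] [Fintype Q] (M : PNFA A Q) : PNFA A Q where
  isQ2 := M.isQ2
  init := M.init
  d1 := M.d1
  d2 q := keepTwo (dFlat M q (fun _ => 0))
  final q := (dFlat M q (fun _ => 0)).any M.final

/-- The δ₂-flattening of `A` *without* applying `r̄` (called `A''` in the paper):
`δ₂''(q) = d(q,0)` and `F'' = {q : some state of F occurs in d(q,0)}`. -/
def PNFA.flattenNoR {A Q : Type} [DecidableEq Q] [Fintype Q] (M : PNFA A Q) : PNFA A Q where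
  isQ2 := M.isQ2
  init := M.init
  d1 := M.d1
  d2 q := dFlat M q (fun _ => 0)
  final q := (dFlat M q (fun _ => 0)).any M.final

/-- Subtree relation on finite ordered trees. -/
inductive IsSubtree {α : Type} : OTree α → OTree α → Prop
  | refl (t : OTree α) : IsSubtree t t
  | child {s t : OTree α} {l : α} {ts : List (OTree α)} :
      t ∈ ts → IsSubtree s t → IsSubtree s (.node l ts)

/-! In `A''` every ε-successor `δ₂''(q) = d(q,0)` lies in `Q₁`, and the run from a `Q₁`-state
does not depend on the counter `C`. Hence the children of a `Q₂`-node are runs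
`btr(p, w, C_p)` that are determined by their root `p`; every other node has at most one child. -/

theorem mem_of_mem_firstSucc {Q : Type} {l : List (OTree (BLab Q))} {t : OTree (BLab Q)}
    (h : t ∈ firstSucc l) : t ∈ l := by
  induction l with
  | nil => exact h
  | cons a as ih =>
    rw [firstSucc] at h
    split at h
    · rw [List.mem_singleton.1 h]
      exact List.mem_cons_self
    · rcases List.mem_cons.1 h with rfl | h
      · exact List.mem_cons_self
      · exact List.mem_cons_of_mem _ (ih h)

section

variable {A Q : Type} [DecidableEq Q] [Fintype Q]

theorem isQ2_eq_false_of_mem_dFlat (M : PNFA A Q) :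
    ∀ q C, ∀ p ∈ dFlat M q C, M.isQ2 p = false := by
  refine dFlat.induct M _ ?_ ?_ ?_
  · intro q C hq hC ih p hp
    rw [dFlat, if_pos hq, dif_pos hC] at hp
    simp only [List.mem_flatten, List.mem_map, List.mem_attach, true_and,
      Subtype.exists] at hp
    obtain ⟨_, ⟨r, hr, rfl⟩, hp⟩ := hp
    exact ih ⟨r, hr⟩ p hp
  · intro q C hq hC p hp
    rw [dFlat, if_pos hq, dif_neg hC] at hp
    simp at hp
  · intro q C hq p hp
    rw [dFlat, if_neg hq, List.mem_singleton] at hp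
    simpa [hp] using hq

theorem PNFA.isQ2_eq_false_of_mem_flattenNoR_d2 (M : PNFA A Q) :
    ∀ q, ∀ p ∈ M.flattenNoR.d2 q, M.flattenNoR.isQ2 p = false :=
  fun q => isQ2_eq_false_of_mem_dFlat M q _

theorem btr_root (M : PNFA A Q) (q : Q) (w : List A) (C : Q → ℕ) :
    (btr M q w C).root = .st q := by
  rw [btr.eq_def]
  repeat' split
  all_goals rfl

theorem btr_eq_of_isQ2_eq_false (M : PNFA A Q) {q : Q} (hq : M.isQ2 q = false) (w : List A)
    (C C' : Q → ℕ) : btr M q w C = btr M q w C' := by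
  rw [btr.eq_def, btr.eq_def]
  simp only [hq, Bool.false_eq_true, if_false]

def PNFA.IsRunTree (M : PNFA A Q) (t : OTree (BLab Q)) : Prop :=
  (∃ b, t = .node b []) ∨ ∃ q w C, t = btr M q w C

theorem PNFA.IsRunTree.of_mem_children {M : PNFA A Q} {l : BLab Q}
    {ts : List (OTree (BLab Q))} (h : M.IsRunTree (.node l ts)) {t : OTree (BLab Q)}
    (ht : t ∈ ts) : M.IsRunTree t := by
  obtain ⟨b, hb⟩ | ⟨q, w, C, hrun⟩ := h
  · cases (OTree.node.inj hb).2
    cases ht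
  rw [btr.eq_def] at hrun
  repeat' split at hrun
  all_goals
    obtain ⟨-, rfl⟩ := OTree.node.inj hrun
    first
    | exact Or.inl ⟨_, List.mem_singleton.1 ht⟩
    | exact Or.inr ⟨_, _, _, List.mem_singleton.1 ht⟩
    | obtain ⟨x, -, rfl⟩ := List.mem_map.1 (mem_of_mem_firstSucc ht)
      exact Or.inr ⟨_, _, _, rfl⟩

theorem PNFA.IsRunTree.of_isSubtree {M : PNFA A Q} {s t : OTree (BLab Q)}
    (hs : IsSubtree s t) (ht : M.IsRunTree t) : M.IsRunTree s := by
  induction hs with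
  | refl => exact ht
  | child hmem _ ih => exact ih (ht.of_mem_children hmem)

theorem btr_children_eq_of_root_eq {M : PNFA A Q} (hM : ∀ q, ∀ p ∈ M.d2 q, M.isQ2 p = false)
    {q : Q} {w : List A} {C : Q → ℕ} {l : BLab Q} {ts : List (OTree (BLab Q))}
    (hrun : btr M q w C = .node l ts) :
    ∀ u ∈ ts, ∀ v ∈ ts, u.root = v.root → u = v := by
  rw [btr.eq_def] at hrun
  repeat' split at hrun
  all_goals
    obtain ⟨-, rfl⟩ := OTree.node.inj hrun
    intro u hu v hv hroot
  case isTrue.isFalse =>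
    obtain ⟨x, -, rfl⟩ := List.mem_map.1 (mem_of_mem_firstSucc hu)
    obtain ⟨y, -, rfl⟩ := List.mem_map.1 (mem_of_mem_firstSucc hv)
    simp only [btr_root, BLab.st.injEq] at hroot
    rw [hroot]
    exact btr_eq_of_isQ2_eq_false M (hM q _ (List.getElem_mem _)) _ _ _
  all_goals rw [List.mem_singleton.1 hu, List.mem_singleton.1 hv]

end

/-- In a backtracking run of the pNFA `A''` (the δ₂-flattening of `A`
without applying `r̄`), any two children of a node that carry the same root label are roots
of identical subtrees. -/
theorem statement12 {A Q : Type} [DecidableEq Q] [Fintype Q] (M : PNFA A Q) (w : List A)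
    (s : OTree (BLab Q)) (hs : IsSubtree s (btrW M.flattenNoR w))
    (l : BLab Q) (ts : List (OTree (BLab Q))) (hval : s = .node l ts)
    (i j : ℕ) (hi : i < ts.length) (hj : j < ts.length)
    (hroot : (ts[i]'hi).root = (ts[j]'hj).root) :
    ts[i]'hi = ts[j]'hj := by
  subst hval
  obtain ⟨b, hleaf⟩ | ⟨q, w', C, hrun⟩ :=
    PNFA.IsRunTree.of_isSubtree hs (Or.inr ⟨_, _, _, rfl⟩)
  · cases (OTree.node.inj hleaf).2
    exact absurd hi (Nat.not_lt_zero i)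
  · exact btr_children_eq_of_root_eq M.isQ2_eq_false_of_mem_flattenNoR_d2 hrun.symm
      _ (List.getElem_mem hi) _ (List.getElem_mem hj) hroot
end

section
/- Let N be an NFA with ε-transitions (possibly containing ε-cycles), with the degree of ambiguity counted via short accepting runs. Then N is either polynomially ambiguous or exponentially ambiguous; that is, if there is no polynomial h such that da(N,w) ≤ h(|w|) for all w ∈ Σ*, then the function g(n) = max{da(N,w) : w ∈ Σ*, |w| ≤ n} is in 2^{Ω(n)}. -/
/-! ## Runs with labels, short runs, and the degree of ambiguity -/

/-- `LRun N q w ps bs`: `ps` is the state sequence and `bs` the label sequence of a run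
of the ε-NFA `N` starting in `q` and reading exactly `w` (`none` is the label ε). -/
inductive LRun {A Q : Type} (N : ENFA A Q) : Q → List A → List Q → List (Option A) → Prop
  | last (q : Q) : LRun N q [] [q] []
  | eps {p q : Q} {w : List A} {ps : List Q} {bs : List (Option A)} :
      q ∈ N.tr p none → LRun N q w ps bs → LRun N p w (p :: ps) (none :: bs)
  | sym {p q : Q} {a : A} {w : List A} {ps : List Q} {bs : List (Option A)} :
      q ∈ N.tr p (some a) → LRun N q w ps bs → LRun N p (a :: w) (p :: ps) (some a :: bs)

/-- A run (given by its state sequence `ps` and label sequence `bs`) is *short* if it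
contains no ε-cycle repeating an ε-transition: there are no `i < j` with
`bs i = … = bs j = ε`, `ps i = ps j` and `ps (i+1) = ps (j+1)`. -/
def ShortRun {A Q : Type} (ps : List Q) (bs : List (Option A)) : Prop :=
  ¬ ∃ i j : ℕ, i < j ∧ j < bs.length ∧
      (∀ l : ℕ, i ≤ l → l ≤ j → bs[l]? = some none) ∧
      ps[i]? = ps[j]? ∧ ps[i + 1]? = ps[j + 1]?

/-- The degree of ambiguity `da(N, w)`: the number of short accepting runs of `N` on `w`. -/
noncomputable def da {A Q : Type} (N : ENFA A Q) (w : List A) : ℕ :=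
  Nat.card {p : List Q × List (Option A) //
    LRun N N.init w p.1 p.2 ∧ (∃ q ∈ N.F, p.1.getLast? = some q) ∧ ShortRun p.1 p.2}

/-! A short accepting run factors uniquely into short ε-runs glued together by letter
transitions, and a short ε-run has length at most `|Q|² + 1`. Hence `da(N, w)` is the weight of
`w` in an ε-free automaton with transition weights in `ℕ`, and the dichotomy is the one for such
weighted automata. If a useful state `s` carries a loop word `x` of weight at least 2, pumping `x`
gives weight `2 ^ m` on words of length `O(m)`. Otherwise every loop of the trimmed automaton
has weight at most 1, and a polynomial bound follows by induction on the number of states: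
a path either avoids a chosen state `s`, or splits at its first and its last visit to `s` into
two paths avoiding `s` around a loop at `s`. -/

theorem List.takeWhile_isNone_append_some {α : Type*} {bs bs' : List (Option α)} {a : α}
    (h : ∀ x ∈ bs, x = none) : (bs ++ some a :: bs').takeWhile Option.isNone = bs := by
  rw [List.takeWhile_append_of_pos fun x hx => by simp [h x hx]]
  simp

theorem Set.natCard_plift_mem {α : Type*} (S : Set α) (t : α) :
    Nat.card (PLift (t ∈ S)) = S.indicator 1 t := by
  by_cases ht : t ∈ S <;> simp [ht]

namespace LRun

variable {A Q : Type} {N : ENFA A Q} {q : Q} {w : List A} {ps : List Q} {bs : List (Option A)}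

theorem length_states (h : LRun N q w ps bs) : ps.length = bs.length + 1 := by
  induction h <;> simp [*]

theorem head?_states (h : LRun N q w ps bs) : ps.head? = some q := by
  cases h <;> rfl

theorem states_ne_nil (h : LRun N q w ps bs) : ps ≠ [] := by
  cases h <;> simp

theorem filterMap_labels (h : LRun N q w ps bs) : bs.filterMap id = w := by
  induction h with
  | last => rfl
  | eps _ _ ih | sym _ _ ih => simpa using ih

theorem eq_none_of_mem_labels (h : LRun N q [] ps bs) {x : Option A} (hx : x ∈ bs) :
    x = none := by
  cases x with
  | none => rfl
  | some a =>
    have ha : a ∈ bs.filterMap id := List.mem_filterMap.mpr ⟨some a, hx, rfl⟩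
    rw [h.filterMap_labels] at ha
    exact absurd ha List.not_mem_nil

theorem append_sym {s t : Q} {a : A} {ps' : List Q} {bs' : List (Option A)}
    (h : LRun N q [] ps bs) (hs : ps.getLast? = some s) (ht : t ∈ N.tr s (some a))
    (h' : LRun N t w ps' bs') : LRun N q (a :: w) (ps ++ ps') (bs ++ some a :: bs') := by
  generalize hw : ([] : List A) = w₀ at h
  induction h with
  | last p =>
    obtain rfl : p = s := by simpa using hs
    exact .sym ht h'
  | eps hq hrun ih =>
    obtain ⟨x, xs, rfl⟩ := List.exists_cons_of_ne_nil hrun.states_ne_nil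
    exact .eps hq (ih (by simpa using hs) hw)
  | sym _ _ _ => simp at hw

theorem exists_eq_append_sym {a : A} (h : LRun N q (a :: w) ps bs) :
    ∃ ps₁ bs₁ s t ps₂ bs₂, ps = ps₁ ++ ps₂ ∧ bs = bs₁ ++ some a :: bs₂ ∧
      LRun N q [] ps₁ bs₁ ∧ ps₁.getLast? = some s ∧ t ∈ N.tr s (some a) ∧
      LRun N t w ps₂ bs₂ := by
  generalize hw : a :: w = w₀ at h
  induction h with
  | last p => simp at hw
  | @eps p _ _ _ _ hq _ ih =>
    obtain ⟨ps₁, bs₁, s, t, ps₂, bs₂, rfl, rfl, h₁, hs, ht, h₂⟩ := ih hw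
    obtain ⟨x, xs, rfl⟩ := List.exists_cons_of_ne_nil h₁.states_ne_nil
    exact ⟨p :: x :: xs, none :: bs₁, s, t, ps₂, bs₂, rfl, rfl, .eps hq h₁,
      by simpa using hs, ht, h₂⟩
  | @sym p q' _ _ _ _ hq hrun _ =>
    obtain ⟨rfl, rfl⟩ := List.cons.inj hw
    exact ⟨[p], [], p, q', _, _, rfl, rfl, .last p, rfl, hq, hrun⟩

end LRun

section ShortRun

variable {A Q : Type} {ps ps' : List Q} {bs bs' : List (Option A)} {i j : ℕ}

def EpsRepeat (ps : List Q) (bs : List (Option A)) (i j : ℕ) : Prop :=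
  i < j ∧ j < bs.length ∧ (∀ l : ℕ, i ≤ l → l ≤ j → bs[l]? = some none) ∧
    ps[i]? = ps[j]? ∧ ps[i + 1]? = ps[j + 1]?

theorem epsRepeat_append_left_iff (hl : ps.length = bs.length + 1) (hj : j < bs.length) :
    EpsRepeat (ps ++ ps') (bs ++ bs') i j ↔ EpsRepeat ps bs i j := by
  have hb : ∀ l ≤ j, (bs ++ bs')[l]? = bs[l]? := fun l hl =>
    List.getElem?_append_left (by omega)
  have hp : ∀ l ≤ j + 1, (ps ++ ps')[l]? = ps[l]? := fun l hl =>
    List.getElem?_append_left (by omega)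
  constructor
  · rintro ⟨hij, -, hε, h₁, h₂⟩
    refine ⟨hij, hj, fun l hil hlj => hb l hlj ▸ hε l hil hlj, ?_, ?_⟩
    · rwa [hp i (by omega), hp j (by omega)] at h₁
    · rwa [hp (i + 1) (by omega), hp (j + 1) le_rfl] at h₂
  · rintro ⟨hij, -, hε, h₁, h₂⟩
    refine ⟨hij, by simp; omega, fun l hil hlj => (hb l hlj).trans (hε l hil hlj), ?_, ?_⟩
    · rwa [hp i (by omega), hp j (by omega)]
    · rwa [hp (i + 1) (by omega), hp (j + 1) le_rfl]

theorem epsRepeat_append_shift_iff (hl : ps.length = bs.length) :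
    EpsRepeat (ps ++ ps') (bs ++ bs') (i + bs.length) (j + bs.length) ↔
      EpsRepeat ps' bs' i j := by
  have hb : ∀ l, (bs ++ bs')[l + bs.length]? = bs'[l]? := fun l => by
    rw [List.getElem?_append_right (by omega), Nat.add_sub_cancel]
  have hp : ∀ l, (ps ++ ps')[l + bs.length]? = ps'[l]? := fun l => by
    rw [List.getElem?_append_right (by omega), hl, Nat.add_sub_cancel]
  have hε : (∀ l, i + bs.length ≤ l → l ≤ j + bs.length →
      (bs ++ bs')[l]? = some none) ↔ ∀ l, i ≤ l → l ≤ j → bs'[l]? = some none := by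
    constructor
    · intro h l hil hlj
      simpa [hb] using h (l + bs.length) (by omega) (by omega)
    · intro h l hil hlj
      obtain ⟨l, rfl⟩ : ∃ l', l = l' + bs.length := ⟨l - bs.length, by omega⟩
      rw [hb]
      exact h l (by omega) (by omega)
  simp only [EpsRepeat, hε, hp, Nat.add_right_comm _ bs.length 1, List.length_append]
  constructor <;> rintro ⟨_, _, h⟩ <;> exact ⟨by omega, by omega, h⟩

theorem epsRepeat_append_cons_shift_iff {a : A} (hl : ps.length = bs.length + 1) :
    EpsRepeat (ps ++ ps') (bs ++ some a :: bs') (i + (bs.length + 1)) (j + (bs.length + 1)) ↔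
      EpsRepeat ps' bs' i j := by
  simpa using epsRepeat_append_shift_iff (ps' := ps') (bs' := bs') (i := i) (j := j)
    (show ps.length = (bs ++ [some a]).length by simpa using hl)

theorem EpsRepeat.lt_or_lt {a : A} (h : EpsRepeat ps (bs ++ some a :: bs') i j) :
    j < bs.length ∨ bs.length < i := by
  by_contra! hij
  simpa using h.2.2.1 bs.length hij.2 hij.1

theorem shortRun_iff : ShortRun ps bs ↔ ¬ ∃ i j, EpsRepeat ps bs i j := Iff.rfl

theorem ShortRun.of_append_left (hl : ps.length = bs.length + 1)
    (h : ShortRun (ps ++ ps') (bs ++ bs')) : ShortRun ps bs := by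
  rintro ⟨i, j, hr⟩
  exact h ⟨i, j, (epsRepeat_append_left_iff hl hr.2.1).2 hr⟩

theorem ShortRun.of_append_right {a : A} (hl : ps.length = bs.length + 1)
    (h : ShortRun (ps ++ ps') (bs ++ some a :: bs')) : ShortRun ps' bs' := by
  rintro ⟨i, j, hr⟩
  exact h ⟨_, _, (epsRepeat_append_cons_shift_iff hl).2 hr⟩

/-- The letter `a` separates the two runs, so a repeated ε-transition lies within one of them. -/
theorem ShortRun.append {a : A} (hl : ps.length = bs.length + 1) (h : ShortRun ps bs)
    (h' : ShortRun ps' bs') : ShortRun (ps ++ ps') (bs ++ some a :: bs') := by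
  rw [shortRun_iff]
  rintro ⟨i, j, hr⟩
  rcases hr.lt_or_lt with hj | hi
  · exact h ⟨i, j, (epsRepeat_append_left_iff hl hj).1 hr⟩
  · obtain ⟨i, rfl⟩ : ∃ i', i = i' + (bs.length + 1) := ⟨i - (bs.length + 1), by omega⟩
    obtain ⟨j, rfl⟩ : ∃ j', j = j' + (bs.length + 1) :=
      ⟨j - (bs.length + 1), by have := hr.1; omega⟩
    exact h' ⟨i, j, (epsRepeat_append_cons_shift_iff hl).1 hr⟩

end ShortRun

namespace ENFA

variable {A Q : Type} (N : ENFA A Q)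

theorem length_states_le_of_shortRun [Fintype Q] {q : Q} {ps : List Q} {bs : List (Option A)}
    (h : LRun N q [] ps bs) (hs : ShortRun ps bs) : ps.length ≤ Fintype.card Q ^ 2 + 1 := by
  have hlen := h.length_states
  -- a repeated pair of consecutive states would be a repeated ε-transition
  have hnd : (ps.zip ps.tail).Nodup := by
    rw [List.nodup_iff_getElem?_ne_getElem?]
    intro i j hij hj heq
    simp only [List.length_zip, List.length_tail] at hj
    rw [List.getElem?_eq_getElem (by simp; omega), List.getElem?_eq_getElem (by simp; omega)]
      at heq
    simp only [List.getElem_zip, List.getElem_tail, Option.some.injEq, Prod.mk.injEq] at heq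
    refine hs ⟨i, j, hij, by omega, fun l _ hl => ?_, ?_, ?_⟩
    · rw [List.getElem?_eq_getElem (by omega)]
      exact congrArg some (h.eq_none_of_mem_labels (List.getElem_mem _))
    · simp [List.getElem?_eq_getElem (show i < ps.length by omega),
        List.getElem?_eq_getElem (show j < ps.length by omega), heq.1]
    · simp [List.getElem?_eq_getElem (show i + 1 < ps.length by omega),
        List.getElem?_eq_getElem (show j + 1 < ps.length by omega), heq.2]
  have := hnd.length_le_card
  simp only [List.length_zip, List.length_tail, Fintype.card_prod] at this
  rw [sq]
  omega

def ShortEpsRun (q s : Q) : Type :=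
  {p : List Q × List (Option A) //
    LRun N q [] p.1 p.2 ∧ p.1.getLast? = some s ∧ ShortRun p.1 p.2}

def ShortAccRun (q : Q) (w : List A) : Type :=
  {p : List Q × List (Option A) //
    LRun N q w p.1 p.2 ∧ (∃ f ∈ N.F, p.1.getLast? = some f) ∧ ShortRun p.1 p.2}

instance [Fintype Q] (q s : Q) : Finite (N.ShortEpsRun q s) := by
  refine Set.Finite.to_subtype (((List.finite_length_le Q (Fintype.card Q ^ 2 + 1)).image
    fun ps => (ps, List.replicate (ps.length - 1) none)).subset ?_)
  rintro ⟨ps, bs⟩ ⟨h, -, hs⟩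
  dsimp only at h hs
  refine ⟨ps, N.length_states_le_of_shortRun h hs, ?_⟩
  have hbs : bs = List.replicate (ps.length - 1) none := by
    rw [List.eq_replicate_iff, h.length_states]
    exact ⟨by omega, fun x hx => h.eq_none_of_mem_labels hx⟩
  rw [hbs]

noncomputable def epsCount (q s : Q) : ℕ := Nat.card (N.ShortEpsRun q s)

/-- Weight of the letter `a` from `q` to `t` in the ε-free automaton: the number of short
ε-runs from `q` followed by an `a`-transition into `t`. -/
noncomputable def stepWeight [Fintype Q] (q : Q) (a : A) (t : Q) : ℕ :=
  ∑ s, N.epsCount q s * (N.tr s (some a)).indicator 1 t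

noncomputable def finalWeight [Fintype Q] (q : Q) : ℕ :=
  ∑ s, N.F.indicator (N.epsCount q) s

def shortAccRunNil (q : Q) (x : Σ s, N.ShortEpsRun q s × PLift (s ∈ N.F)) :
    N.ShortAccRun q [] :=
  ⟨x.2.1.1, x.2.1.2.1, ⟨x.1, x.2.2.down, x.2.1.2.2.1⟩, x.2.1.2.2.2⟩

theorem shortAccRunNil_bijective (q : Q) : Function.Bijective (N.shortAccRunNil q) := by
  constructor
  · rintro ⟨s, e, hs⟩ ⟨s', e', hs'⟩ he
    have hv : e.1 = e'.1 := congrArg Subtype.val he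
    obtain rfl : s = s' := Option.some_injective _ (e.2.2.1.symm.trans (hv ▸ e'.2.2.1))
    obtain rfl : e = e' := Subtype.ext hv
    rw [Subsingleton.elim hs hs']
  · rintro ⟨p, h, ⟨f, hf, hlast⟩, hs⟩
    exact ⟨⟨f, ⟨p, h, hlast, hs⟩, ⟨hf⟩⟩, rfl⟩

def shortAccRunCons (q : Q) (a : A) (w : List A)
    (x : Σ s t, N.ShortEpsRun q s × PLift (t ∈ N.tr s (some a)) × N.ShortAccRun t w) :
    N.ShortAccRun q (a :: w) :=
  let ⟨_, _, e, ht, r⟩ := x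
  ⟨(e.1.1 ++ r.1.1, e.1.2 ++ some a :: r.1.2), e.2.1.append_sym e.2.2.1 ht.down r.2.1,
    by simpa [List.getLast?_append_of_ne_nil _ r.2.1.states_ne_nil] using r.2.2.1,
    e.2.2.2.append e.2.1.length_states r.2.2.2⟩

theorem shortAccRunCons_bijective (q : Q) (a : A) (w : List A) :
    Function.Bijective (N.shortAccRunCons q a w) := by
  constructor
  · rintro ⟨s, t, e, ht, r⟩ ⟨s', t', e', ht', r'⟩ he
    have hv : (e.1.1 ++ r.1.1, e.1.2 ++ some a :: r.1.2) =
        (e'.1.1 ++ r'.1.1, e'.1.2 ++ some a :: r'.1.2) := congrArg Subtype.val he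
    obtain ⟨hps, hbs⟩ := Prod.mk.inj hv
    have hb₁ : e.1.2 = e'.1.2 := by
      rw [← List.takeWhile_isNone_append_some (a := a) (bs' := r.1.2)
        fun _ => e.2.1.eq_none_of_mem_labels, hbs,
        List.takeWhile_isNone_append_some fun _ => e'.2.1.eq_none_of_mem_labels]
    have hb₂ : r.1.2 = r'.1.2 := by simpa [hb₁] using hbs
    obtain ⟨hp₁, hp₂⟩ := List.append_inj hps
      (by rw [e.2.1.length_states, e'.2.1.length_states, hb₁])
    obtain rfl : s = s' := Option.some_injective _ (e.2.2.1.symm.trans (hp₁ ▸ e'.2.2.1))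
    obtain rfl : t = t' :=
      Option.some_injective _ (r.2.1.head?_states.symm.trans (hp₂ ▸ r'.2.1.head?_states))
    obtain rfl : e = e' := Subtype.ext (Prod.ext hp₁ hb₁)
    obtain rfl : r = r' := Subtype.ext (Prod.ext hp₂ hb₂)
    rw [Subsingleton.elim ht ht']
  · rintro ⟨⟨ps, bs⟩, h, ⟨f, hf, hlast⟩, hs⟩
    obtain ⟨ps₁, bs₁, s, t, ps₂, bs₂, rfl, rfl, h₁, hs₁, ht, h₂⟩ := h.exists_eq_append_sym
    have hl := h₁.length_states
    refine ⟨⟨s, t, ⟨(ps₁, bs₁), h₁, hs₁, hs.of_append_left hl⟩, ⟨ht⟩,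
      ⟨(ps₂, bs₂), h₂, ⟨f, hf, ?_⟩, hs.of_append_right hl⟩⟩, rfl⟩
    rwa [List.getLast?_append_of_ne_nil _ h₂.states_ne_nil] at hlast

variable [Fintype Q]

instance (q : Q) (w : List A) : Finite (N.ShortAccRun q w) := by
  induction w generalizing q with
  | nil => exact Finite.of_surjective _ (N.shortAccRunNil_bijective q).2
  | cons a w ih => exact Finite.of_surjective _ (N.shortAccRunCons_bijective q a w).2

theorem card_shortAccRun_nil (q : Q) : Nat.card (N.ShortAccRun q []) = N.finalWeight q := by
  rw [← Nat.card_eq_of_bijective _ (N.shortAccRunNil_bijective q), Nat.card_sigma, finalWeight]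
  refine Finset.sum_congr rfl fun s _ => ?_
  rw [Nat.card_prod, Set.natCard_plift_mem]
  by_cases hs : s ∈ N.F <;> simp [hs, epsCount]

theorem card_shortAccRun_cons (q : Q) (a : A) (w : List A) :
    Nat.card (N.ShortAccRun q (a :: w)) =
      ∑ t, N.stepWeight q a t * Nat.card (N.ShortAccRun t w) := by
  rw [← Nat.card_eq_of_bijective _ (N.shortAccRunCons_bijective q a w), Nat.card_sigma]
  simp only [Nat.card_sigma, Nat.card_prod, Set.natCard_plift_mem, stepWeight, Finset.sum_mul]
  rw [Finset.sum_comm]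
  exact Finset.sum_congr rfl fun s _ => Finset.sum_congr rfl fun t _ => by
    rw [epsCount, mul_assoc]

end ENFA

namespace WeightedAutomaton

variable {A Q : Type}

def reverse (c : Q → A → Q → ℕ) : Q → A → Q → ℕ := fun x a y => c y a x

section EraseState

variable [DecidableEq Q]

def eraseState (c : Q → A → Q → ℕ) (s : Q) : Q → A → Q → ℕ :=
  fun x a y => if x = s ∨ y = s then 0 else c x a y

variable {c : Q → A → Q → ℕ} {s : Q}

theorem eraseState_le (x : Q) (a : A) (y : Q) : eraseState c s x a y ≤ c x a y := by
  unfold eraseState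
  split <;> omega

theorem reverse_eraseState : reverse (eraseState c s) = eraseState (reverse c) s := by
  funext x a y
  simp [reverse, eraseState, or_comm]

end EraseState

variable [Fintype Q] [DecidableEq Q]

/-- `c x a y` is the number of `a`-transitions from `x` to `y`, and `pathCount c w p q` the number
of paths from `p` to `q` labelled `w`. -/
def pathCount (c : Q → A → Q → ℕ) : List A → Q → Q → ℕ
  | [], p, q => if p = q then 1 else 0
  | a :: w, p, q => ∑ t, c p a t * pathCount c w t q

variable {c c' : Q → A → Q → ℕ}

theorem pathCount_append (u v : List A) (p q : Q) :
    pathCount c (u ++ v) p q = ∑ t, pathCount c u p t * pathCount c v t q := by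
  induction u generalizing p with
  | nil => simp [pathCount, ite_mul]
  | cons a u ih =>
    simp only [List.cons_append, pathCount, ih, Finset.mul_sum, Finset.sum_mul, mul_assoc]
    exact Finset.sum_comm

theorem mul_le_pathCount_append (u v : List A) (p s q : Q) :
    pathCount c u p s * pathCount c v s q ≤ pathCount c (u ++ v) p q := by
  rw [pathCount_append]
  exact Finset.single_le_sum (f := fun t => pathCount c u p t * pathCount c v t q)
    (fun _ _ => Nat.zero_le _) (Finset.mem_univ s)

theorem pathCount_mono (h : ∀ x a y, c x a y ≤ c' x a y) (w : List A) (p q : Q) :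
    pathCount c w p q ≤ pathCount c' w p q := by
  induction w generalizing p with
  | nil => rfl
  | cons a w ih => exact Finset.sum_le_sum fun t _ => Nat.mul_le_mul (h p a t) (ih t)

theorem pathCount_le_one_of_eq_zero (h : ∀ x a y, c x a y = 0) (w : List A) (p q : Q) :
    pathCount c w p q ≤ 1 := by
  cases w with
  | nil => simp only [pathCount]; split <;> omega
  | cons a w => simp [pathCount, h]

theorem pow_le_pathCount_flatten_replicate (x : List A) (s : Q) (m : ℕ) :
    pathCount c x s s ^ m ≤ pathCount c (List.replicate m x).flatten s s := by
  induction m with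
  | zero => simp [pathCount]
  | succ m ih =>
    rw [pow_succ', List.replicate_succ, List.flatten_cons]
    exact (Nat.mul_le_mul_left _ ih).trans (mul_le_pathCount_append _ _ _ _ _)

theorem pathCount_reverse (w : List A) (p q : Q) :
    pathCount (reverse c) w p q = pathCount c w.reverse q p := by
  induction w generalizing p with
  | nil => simp [pathCount, eq_comm]
  | cons a w ih => simp [pathCount, pathCount_append, ih, reverse, mul_comm]

def accWeight (c : Q → A → Q → ℕ) (f : Q → ℕ) (w : List A) (p : Q) : ℕ :=
  ∑ t, pathCount c w p t * f t

variable {f : Q → ℕ}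

theorem accWeight_nil (p : Q) : accWeight c f [] p = f p := by
  simp [accWeight, pathCount]

theorem accWeight_cons (a : A) (w : List A) (p : Q) :
    accWeight c f (a :: w) p = ∑ t, c p a t * accWeight c f w t := by
  simp only [accWeight, pathCount, Finset.sum_mul, Finset.mul_sum, mul_assoc]
  exact Finset.sum_comm

theorem accWeight_mono (h : ∀ x a y, c x a y ≤ c' x a y) (w : List A) (q : Q) :
    accWeight c f w q ≤ accWeight c' f w q :=
  Finset.sum_le_sum fun t _ => Nat.mul_le_mul_right _ (pathCount_mono h w q t)

theorem mul_le_accWeight_append (u v : List A) (p s : Q) :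
    pathCount c u p s * accWeight c f v s ≤ accWeight c f (u ++ v) p := by
  simp only [accWeight, pathCount_append, Finset.sum_mul, Finset.mul_sum, mul_assoc]
  rw [Finset.sum_comm]
  exact Finset.single_le_sum
    (f := fun t => ∑ i, pathCount c u p t * (pathCount c v t i * f i))
    (fun _ _ => Nat.zero_le _) (Finset.mem_univ s)

section FirstVisit

variable (c) (s : Q)

/-- Number of paths from `p` to `q` labelled `w` that never visit `s`. -/
def avoidCount : List A → Q → Q → ℕ
  | [], p, q => if p = s then 0 else if p = q then 1 else 0
  | a :: w, p, q => if p = s then 0 else ∑ t, c p a t * avoidCount w t q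

/-- Number of paths from `p` labelled by the first `i` letters of `w` that visit `s` for the
first time at their end (zero if `w` has fewer than `i` letters). -/
def firstVisitCount : ℕ → List A → Q → ℕ
  | 0, _, p => if p = s then 1 else 0
  | _ + 1, [], _ => 0
  | i + 1, a :: w, p => if p = s then 0 else ∑ t, c p a t * firstVisitCount i w t

variable {c s}

theorem avoidCount_self_left (w : List A) (q : Q) : avoidCount c s w s q = 0 := by
  cases w <;> simp [avoidCount]

theorem avoidCount_le_pathCount_eraseState (w : List A) (p q : Q) :
    avoidCount c s w p q ≤ pathCount (eraseState c s) w p q := by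
  induction w generalizing p with
  | nil => simp only [avoidCount, pathCount]; split <;> simp
  | cons a w ih =>
    simp only [avoidCount, pathCount]
    split_ifs with hp
    · exact Nat.zero_le _
    refine Finset.sum_le_sum fun t _ => ?_
    by_cases ht : t = s
    · simp [ht, avoidCount_self_left]
    · simpa [eraseState, hp, ht] using Nat.mul_le_mul_left _ (ih t)

/-- Splitting a path at its first visit to `s`. -/
theorem pathCount_eq_avoidCount_add_sum (w : List A) (p q : Q) :
    pathCount c w p q = avoidCount c s w p q +
      ∑ i ∈ Finset.range (w.length + 1),
        firstVisitCount c s i w p * pathCount c (w.drop i) s q := by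
  induction w generalizing p with
  | nil => by_cases hp : p = s <;> simp [hp, pathCount, avoidCount, firstVisitCount]
  | cons a w ih =>
    by_cases hp : p = s
    · subst hp
      simp [Finset.sum_range_succ', avoidCount, firstVisitCount]
    · simp only [pathCount, ih, avoidCount, hp, if_false, mul_add, Finset.sum_add_distrib,
        List.length_cons, Finset.sum_range_succ' _ (w.length + 1), firstVisitCount,
        List.drop_succ_cons, Finset.mul_sum, Finset.sum_mul, mul_assoc]
      rw [Finset.sum_comm]
      simp

theorem firstVisitCount_succ_le {b : ℕ} (hb : ∀ x a y, c x a y ≤ b) (w : List A) (i : ℕ)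
    (p : Q) : firstVisitCount c s (i + 1) w p ≤ b * ∑ u, avoidCount c s (w.take i) p u := by
  induction w generalizing i p with
  | nil => simp [firstVisitCount]
  | cons a w ih =>
    by_cases hp : p = s
    · simp [firstVisitCount, hp]
    cases i with
    | zero => simpa [firstVisitCount, avoidCount, hp] using hb p a s
    | succ i =>
      calc firstVisitCount c s (i + 2) (a :: w) p
          = ∑ t, c p a t * firstVisitCount c s (i + 1) w t := by simp [firstVisitCount, hp]
        _ ≤ ∑ t, c p a t * (b * ∑ u, avoidCount c s (w.take i) t u) :=
          Finset.sum_le_sum fun t _ => Nat.mul_le_mul_left _ (ih i t)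
        _ = b * ∑ u, avoidCount c s ((a :: w).take (i + 1)) p u := by
          simp only [List.take_succ_cons, avoidCount, hp, if_false, Finset.mul_sum]
          rw [Finset.sum_comm]
          exact Finset.sum_congr rfl fun _ _ => Finset.sum_congr rfl fun _ _ => by ring

end FirstVisit

section PolynomialBound

variable {c : Q → A → Q → ℕ} {s : Q} {b n F : ℕ}

theorem firstVisitCount_le (hb : ∀ x a y, c x a y ≤ b)
    (hF : ∀ (y : List A) p q, y.length ≤ n → pathCount (eraseState c s) y p q ≤ F)
    {w : List A} (hw : w.length ≤ n) (i : ℕ) (p : Q) :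
    firstVisitCount c s i w p ≤ b * Fintype.card Q * F + 1 := by
  cases i with
  | zero => simp only [firstVisitCount]; split <;> omega
  | succ i =>
    calc firstVisitCount c s (i + 1) w p ≤ b * ∑ u, avoidCount c s (w.take i) p u :=
          firstVisitCount_succ_le hb w i p
      _ ≤ b * ∑ _u : Q, F := by
          refine Nat.mul_le_mul_left b (Finset.sum_le_sum fun u _ => ?_)
          exact (avoidCount_le_pathCount_eraseState _ p u).trans
            (hF _ p u ((List.length_take_le' _ _).trans hw))
      _ ≤ b * Fintype.card Q * F + 1 := by simp [mul_assoc]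

theorem pathCount_le_of_eraseState {G : ℕ} (hb : ∀ x a y, c x a y ≤ b)
    (hF : ∀ (y : List A) p q, y.length ≤ n → pathCount (eraseState c s) y p q ≤ F) {q : Q}
    (hG : ∀ u : List A, u.length ≤ n → pathCount c u s q ≤ G)
    {w : List A} (hw : w.length ≤ n) (p : Q) :
    pathCount c w p q ≤ F + (n + 1) * ((b * Fintype.card Q * F + 1) * G) := by
  rw [pathCount_eq_avoidCount_add_sum (s := s)]
  gcongr
  · exact (avoidCount_le_pathCount_eraseState w p q).trans (hF w p q hw)
  · calc _ ≤ ∑ _i ∈ Finset.range (w.length + 1), (b * Fintype.card Q * F + 1) * G :=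
          Finset.sum_le_sum fun i _ => Nat.mul_le_mul (firstVisitCount_le hb hF hw i p)
            (hG _ (by simp; omega))
      _ ≤ (n + 1) * ((b * Fintype.card Q * F + 1) * G) := by
          rw [Finset.sum_const, Finset.card_range, smul_eq_mul]
          gcongr

theorem pathCount_from_le_of_eraseState (hb : ∀ x a y, c x a y ≤ b)
    (hF : ∀ (y : List A) p q, y.length ≤ n → pathCount (eraseState c s) y p q ≤ F)
    (hloop : ∀ y : List A, pathCount c y s s ≤ 1) {u : List A} (hu : u.length ≤ n) (q : Q) :
    pathCount c u s q ≤ F + (n + 1) * (b * Fintype.card Q * F + 1) := by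
  -- split the reversed path at its first visit to `s`, i.e. the original one at its last visit
  rw [← List.reverse_reverse u, ← pathCount_reverse]
  simpa using pathCount_le_of_eraseState (c := reverse c) (G := 1) (fun x a y => hb y a x)
    (fun y p q hy => by
      simpa [← reverse_eraseState, pathCount_reverse] using hF y.reverse q p (by simpa using hy))
    (fun y _ => by simpa [pathCount_reverse] using hloop y.reverse) (by simpa using hu) q

theorem exists_polynomial_bound_of_support [Fintype A] (V : Finset Q) (c : Q → A → Q → ℕ)
    (hV : ∀ x a y, c x a y ≠ 0 → x ∈ V ∧ y ∈ V)
    (hloop : ∀ (s : Q) (y : List A), pathCount c y s s ≤ 1) :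
    ∃ P : Polynomial ℕ, ∀ n (w : List A) p q, w.length ≤ n → pathCount c w p q ≤ P.eval n := by
  induction V using Finset.induction_on generalizing c with
  | empty =>
    have hc : ∀ x a y, c x a y = 0 := fun x a y =>
      by_contra fun h => by simpa using (hV x a y h).1
    exact ⟨1, fun n w p q _ => by simpa using pathCount_le_one_of_eq_zero hc w p q⟩
  | @insert s V _ ih =>
    have hVs : ∀ x a y, eraseState c s x a y ≠ 0 → x ∈ V ∧ y ∈ V := by
      intro x a y h
      have hxy : ¬(x = s ∨ y = s) := fun hxy => h (if_pos hxy)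
      obtain ⟨hx, hy⟩ := hV x a y fun h0 => h (by simp [eraseState, h0])
      push Not at hxy
      exact ⟨(Finset.mem_insert.1 hx).resolve_left hxy.1,
        (Finset.mem_insert.1 hy).resolve_left hxy.2⟩
    obtain ⟨P, hP⟩ := ih _ hVs fun t y => (pathCount_mono eraseState_le y t t).trans (hloop t y)
    obtain ⟨b, hb⟩ := Finite.exists_le fun x : Q × A × Q => c x.1 x.2.1 x.2.2
    have hb : ∀ x a y, c x a y ≤ b := fun x a y => hb (x, a, y)
    -- the bound of `pathCount_le_of_eraseState`, with `F = P` and `G` from the last visit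
    let R := Polynomial.C (b * Fintype.card Q) * P + 1
    refine ⟨P + (Polynomial.X + 1) * (R * (P + (Polynomial.X + 1) * R)), fun n w p q hw => ?_⟩
    simpa [R] using pathCount_le_of_eraseState hb (hP n)
      (fun u hu => pathCount_from_le_of_eraseState hb (hP n) (hloop s) hu q) hw p

end PolynomialBound

section Trim

variable (c : Q → A → Q → ℕ) (f : Q → ℕ) (p : Q)

def Useful (s : Q) : Prop :=
  (∃ y : List A, 0 < pathCount c y p s) ∧ ∃ z : List A, 0 < accWeight c f z s

open Classical in
noncomputable def trim : Q → A → Q → ℕ :=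
  fun x a y => if Useful c f p x ∧ Useful c f p y then c x a y else 0

variable {c f p}

theorem trim_le (x : Q) (a : A) (y : Q) : trim c f p x a y ≤ c x a y := by
  unfold trim
  split <;> omega

theorem Useful.of_step {s t : Q} {a : A} {w : List A} (hs : Useful c f p s)
    (hst : c s a t ≠ 0) (ht : accWeight c f w t ≠ 0) : Useful c f p t := by
  obtain ⟨⟨y, hy⟩, -⟩ := hs
  refine ⟨⟨y ++ [a], lt_of_lt_of_le ?_ (mul_le_pathCount_append y [a] p s t)⟩, w, by omega⟩
  simpa [pathCount] using Nat.mul_pos hy (Nat.pos_of_ne_zero hst)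

theorem accWeight_trim {s : Q} (hs : Useful c f p s) (w : List A) :
    accWeight (trim c f p) f w s = accWeight c f w s := by
  induction w generalizing s with
  | nil => simp [accWeight_nil]
  | cons a w ih =>
    simp only [accWeight_cons]
    refine Finset.sum_congr rfl fun t _ => ?_
    by_cases hst : c s a t = 0
    · simp [hst, Nat.le_zero.mp (hst ▸ trim_le (c := c) (f := f) (p := p) s a t)]
    by_cases ht : accWeight c f w t = 0
    · simp [ht, Nat.le_zero.mp (ht ▸ accWeight_mono (trim_le (p := p)) w t)]
    have ht' := hs.of_step hst ht
    simp [trim, hs, ht', ih ht']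

theorem pathCount_trim_self_le_one
    (h : ∀ s (x : List A), Useful c f p s → pathCount c x s s ≤ 1) (s : Q) (y : List A) :
    pathCount (trim c f p) y s s ≤ 1 := by
  by_cases hs : Useful c f p s
  · exact (pathCount_mono trim_le y s s).trans (h s y hs)
  · exact match y with
    | [] => by simp [pathCount]
    | a :: y => by simp [pathCount, trim, hs]

end Trim

theorem exists_polynomial_bound_or_pumping [Fintype A] (c : Q → A → Q → ℕ) (f : Q → ℕ)
    (p : Q) :
    (∃ P : Polynomial ℕ, ∀ w : List A, accWeight c f w p ≤ P.eval w.length) ∨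
      ∃ y x z : List A, x ≠ [] ∧
        ∀ m, 2 ^ m ≤ accWeight c f (y ++ (List.replicate m x).flatten ++ z) p := by
  by_cases hpump : ∃ s x, Useful c f p s ∧ 2 ≤ pathCount c x s s
  · obtain ⟨s, x, ⟨⟨y, hy⟩, ⟨z, hz⟩⟩, hx⟩ := hpump
    refine .inr ⟨y, x, z, by rintro rfl; simp [pathCount] at hx, fun m => ?_⟩
    set X := (List.replicate m x).flatten
    calc 2 ^ m ≤ pathCount c y p s * (pathCount c X s s * accWeight c f z s) := by
          simpa using Nat.mul_le_mul hy (Nat.mul_le_mul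
            ((Nat.pow_le_pow_left hx m).trans (pow_le_pathCount_flatten_replicate x s m)) hz)
      _ ≤ pathCount c y p s * accWeight c f (X ++ z) s :=
          Nat.mul_le_mul_left _ (mul_le_accWeight_append X z s s)
      _ ≤ accWeight c f (y ++ X ++ z) p := by
          simpa using mul_le_accWeight_append y (X ++ z) p s
  refine .inl ?_
  push Not at hpump
  by_cases hp : ∃ z : List A, 0 < accWeight c f z p
  · have hpu : Useful c f p p := ⟨⟨[], by simp [pathCount]⟩, hp⟩
    obtain ⟨P, hP⟩ := exists_polynomial_bound_of_support Finset.univ (trim c f p) (by simp)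
      (pathCount_trim_self_le_one fun s x hs => Nat.le_of_lt_succ (hpump s x hs))
    refine ⟨P * Polynomial.C (∑ t, f t), fun w => ?_⟩
    rw [← accWeight_trim hpu, Polynomial.eval_mul, Polynomial.eval_C, Finset.mul_sum]
    exact Finset.sum_le_sum fun t _ => Nat.mul_le_mul_right _ (hP _ w p t le_rfl)
  · push Not at hp
    exact ⟨0, fun w => by simpa using hp w⟩

end WeightedAutomaton

open WeightedAutomaton in
theorem ENFA.card_shortAccRun_eq_accWeight {A Q : Type} [Fintype Q] [DecidableEq Q]
    (N : ENFA A Q) (w : List A) (q : Q) :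
    Nat.card (N.ShortAccRun q w) = accWeight N.stepWeight N.finalWeight w q := by
  induction w generalizing q with
  | nil => rw [N.card_shortAccRun_nil, accWeight_nil]
  | cons a w ih => simp only [N.card_shortAccRun_cons, accWeight_cons, ih]

theorem da_eq_accWeight {A Q : Type} [Fintype Q] [DecidableEq Q] (N : ENFA A Q) (w : List A) :
    da N w = WeightedAutomaton.accWeight N.stepWeight N.finalWeight w N.init :=
  N.card_shortAccRun_eq_accWeight w N.init

theorem expGrowth_of_two_pow_le {f : ℕ → ℕ} {a L : ℕ} (hL : 0 < L)
    (h : ∀ m n, a + L * m ≤ n → 2 ^ m ≤ f n) : ExpGrowth f := by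
  set c : ℝ := 2 ^ ((↑(2 * L) : ℝ)⁻¹)
  have hc : c ^ (2 * L) = 2 := Real.rpow_inv_natCast_pow (by norm_num) (by omega)
  have hc1 : 1 < c := Real.one_lt_rpow (by norm_num) (by positivity)
  refine ⟨c, hc1, 2 * a + 2 * L, fun n hn => ?_⟩
  set m := (n - a) / L
  have hm : L * m ≤ n - a := Nat.mul_div_le (n - a) L
  have hnm : n ≤ 2 * L * m := by
    have := Nat.lt_mul_div_succ (n - a) hL
    rw [Nat.mul_succ] at this
    rw [mul_assoc]
    generalize L * m = k at *
    omega
  calc c ^ n ≤ c ^ (2 * L * m) := pow_le_pow_right₀ hc1.le hnm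
    _ = 2 ^ m := by rw [pow_mul, hc]
    _ ≤ f n := by exact_mod_cast h m n (by omega)

theorem bddAbove_setOf_length_le {A : Type} [Finite A] (g : List A → ℕ) (n : ℕ) :
    BddAbove {m | ∃ w : List A, w.length ≤ n ∧ m = g w} := by
  have : {m | ∃ w : List A, w.length ≤ n ∧ m = g w} = g '' {w | w.length ≤ n} := by
    ext m
    constructor <;> rintro ⟨w, hw, rfl⟩ <;> exact ⟨w, hw, rfl⟩
  exact this ▸ ((List.finite_length_le A n).image g).bddAbove

/-- An NFA with ε-transitions is either polynomially or exponentially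
ambiguous: if there is no polynomial `h` with `da(N,w) ≤ h(|w|)` for all `w`, then
`g(n) = max{da(N,w) : |w| ≤ n}` is in `2^{Ω(n)}`.  (The alphabet and state set being
finite, the set below is a nonempty bounded set of naturals, so `sSup` is its maximum.) -/
theorem statement17 {A Q : Type} [Fintype A] [Fintype Q] (N : ENFA A Q)
    (h : ¬ ∃ p : Polynomial ℕ, ∀ w : List A, da N w ≤ p.eval w.length) :
    ExpGrowth (fun n => sSup {m | ∃ w : List A, w.length ≤ n ∧ m = da N w}) := by
  classical
  obtain ⟨P, hP⟩ | ⟨y, x, z, hx, hpump⟩ :=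
    WeightedAutomaton.exists_polynomial_bound_or_pumping N.stepWeight N.finalWeight N.init
  · exact absurd ⟨P, fun w => da_eq_accWeight N w ▸ hP w⟩ h
  refine expGrowth_of_two_pow_le (a := y.length + z.length) (List.length_pos_iff.2 hx)
    fun m n hn => ?_
  refine (da_eq_accWeight N _ ▸ hpump m).trans
    (le_csSup (bddAbove_setOf_length_le _ n) ⟨_, ?_, rfl⟩)
  simp only [List.length_append, List.length_flatten, List.map_replicate, List.sum_replicate,
    smul_eq_mul]
  have := Nat.mul_comm m x.length
  omega
end
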